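/- arXiv:1707.05491 — 2 statements merged into one kernel-verified Lean document; each statement's English description precedes it below -/
import Mathlib

section
/- Let G be a graph and let Ω be a potential maximal clique in G. Let D be a connected component of G − Ω, and set S = N(D). Then S is a minimal separator in G. Moreover, the set consisting of Ω \ S together with the union of all components D' of G − Ω with N(D') ⊄ N(D) forms a single connected component of G − S, and both this component and D are full to S. -/
open SimpleGraph

variable {V : Type*}

/-- `D` is (the vertex set of) a connected component of `G - S`. -/
def IsCompOf (G : SimpleGraph V) (S D : Set V) : Prop :=
  D.Nonempty ∧ Disjoint D S ∧ (G.induce D).Connected ∧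
    ∀ v ∈ D, ∀ w : V, G.Adj v w → w ∉ S → w ∈ D

/-- The open neighborhood `N(D)` of a vertex set `D`. -/
def nbhd (G : SimpleGraph V) (D : Set V) : Set V :=
  {v | v ∉ D ∧ ∃ d ∈ D, G.Adj v d}

/-- The closed neighborhood `N[D]` of a vertex set `D`. -/
def closedNbhd (G : SimpleGraph V) (D : Set V) : Set V :=
  D ∪ nbhd G D

/-- `D` is full to `S`: every vertex of `S` has a neighbor in `D`. -/
def FullTo (G : SimpleGraph V) (S D : Set V) : Prop :=
  ∀ s ∈ S, ∃ d ∈ D, G.Adj s d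

/-- `S` is a minimal separator: `G - S` has at least two components full to `S`. -/
def IsMinSep (G : SimpleGraph V) (S : Set V) : Prop :=
  ∃ D₁ D₂ : Set V, IsCompOf G S D₁ ∧ IsCompOf G S D₂ ∧ D₁ ≠ D₂ ∧
    FullTo G S D₁ ∧ FullTo G S D₂

/-- `Ω` is a potential maximal clique of `G`. -/
def IsPMC (G : SimpleGraph V) (Ω : Set V) : Prop :=
  (∀ D : Set V, IsCompOf G Ω D → nbhd G D ≠ Ω) ∧
  (∀ u ∈ Ω, ∀ v ∈ Ω, u ≠ v → ¬ G.Adj u v →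
    ∃ D : Set V, IsCompOf G Ω D ∧ u ∈ nbhd G D ∧ v ∈ nbhd G D)

section Aux
variable {G : SimpleGraph V} {Ω : Set V} {w : V}

lemma nbhd_subset {D : Set V} (hD : IsCompOf G Ω D) : nbhd G D ⊆ Ω := by
  rintro v ⟨hvD, d, hd, hadj⟩
  by_contra hv
  exact hvD (hD.2.2.2 d hd v hadj.symm hv)

lemma reach_mono (G : SimpleGraph V) {A B : Set V} (h : A ⊆ B) {x y : V} (hx : x ∈ A) (hy : y ∈ A)
    (hr : (G.induce A).Reachable ⟨x, hx⟩ ⟨y, hy⟩) :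
    (G.induce B).Reachable ⟨x, h hx⟩ ⟨y, h hy⟩ :=
  hr.map (⟨fun a => ⟨a.1, h a.2⟩, fun {a b} hab => hab⟩ : G.induce A →g G.induce B)

def compOf (G : SimpleGraph V) (Ω : Set V) (w : V) (hw : w ∉ Ω) : Set V :=
  {u | ∃ h : u ∉ Ω, (G.induce Ωᶜ).Reachable ⟨w, hw⟩ ⟨u, h⟩}

lemma compOf_self (hw : w ∉ Ω) : w ∈ compOf G Ω w hw := ⟨hw, Reachable.refl _⟩

lemma compOf_closed (hw : w ∉ Ω) :
    ∀ v ∈ compOf G Ω w hw, ∀ x : V, G.Adj v x → x ∉ Ω → x ∈ compOf G Ω w hw := by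
  rintro v ⟨hv, hr⟩ x hadj hx
  exact ⟨hx, hr.trans (Adj.reachable (by exact hadj))⟩

lemma compOf_reach (hw : w ∉ Ω) {a b : ↥(Ωᶜ : Set V)} (p : (G.induce (Ωᶜ : Set V)).Walk a b)
    (ha : (a : V) ∈ compOf G Ω w hw) :
    ∃ hb : (b : V) ∈ compOf G Ω w hw,
      (G.induce (compOf G Ω w hw)).Reachable ⟨a, ha⟩ ⟨b, hb⟩ := by
  induction p with
  | nil => exact ⟨ha, Reachable.refl _⟩
  | @cons a c b h p ih =>
    have hc : (c : V) ∈ compOf G Ω w hw := compOf_closed hw _ ha _ h c.2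
    obtain ⟨hb, hr⟩ := ih hc
    exact ⟨hb, (Adj.reachable (by exact h : (G.induce (compOf G Ω w hw)).Adj ⟨a, ha⟩ ⟨c, hc⟩)).trans hr⟩

lemma compOf_isCompOf (hw : w ∉ Ω) : IsCompOf G Ω (compOf G Ω w hw) := by
  refine ⟨⟨w, compOf_self hw⟩, ?_, ?_, compOf_closed hw⟩
  · exact Set.disjoint_left.mpr fun v hv => hv.1
  · have key : ∀ a : ↥(compOf G Ω w hw),
        (G.induce (compOf G Ω w hw)).Reachable ⟨w, compOf_self hw⟩ a := by
      rintro ⟨a, ha⟩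
      obtain ⟨p⟩ := ha.2
      obtain ⟨hb, hr⟩ := compOf_reach hw p (compOf_self hw)
      exact hr
    have : Nonempty ↥(compOf G Ω w hw) := ⟨⟨w, compOf_self hw⟩⟩
    exact ⟨fun a b => (key a).symm.trans (key b)⟩
end Aux

/-- For a PMC `Ω` and a component `D` of `G - Ω` with `S = N(D)`: `S` is a minimal
separator, and `(Ω \ S)` together with all components `D'` of `G - Ω` with
`N(D') ⊄ N(D)` forms a single component of `G - S`; both it and `D` are full to `S`. -/
theorem statement_7 [Fintype V] (G : SimpleGraph V) (Ω D : Set V)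
    (hΩ : IsPMC G Ω) (hD : IsCompOf G Ω D) :
    IsMinSep G (nbhd G D) ∧
    IsCompOf G (nbhd G D)
      ((Ω \ nbhd G D) ∪ ⋃₀ {D' : Set V | IsCompOf G Ω D' ∧ ¬ nbhd G D' ⊆ nbhd G D}) ∧
    IsCompOf G (nbhd G D) D ∧
    FullTo G (nbhd G D)
      ((Ω \ nbhd G D) ∪ ⋃₀ {D' : Set V | IsCompOf G Ω D' ∧ ¬ nbhd G D' ⊆ nbhd G D}) ∧
    FullTo G (nbhd G D) D ∧
    ((Ω \ nbhd G D) ∪ ⋃₀ {D' : Set V | IsCompOf G Ω D' ∧ ¬ nbhd G D' ⊆ nbhd G D}) ≠ D := by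
  classical
  set S := nbhd G D with hSdef
  set C := (Ω \ S) ∪ ⋃₀ {D' : Set V | IsCompOf G Ω D' ∧ ¬ nbhd G D' ⊆ S} with hCdef
  have hSΩ : S ⊆ Ω := nbhd_subset hD
  -- a nonempty part of Ω \ S
  have hx0 : ∃ x, x ∈ Ω \ S := by
    have hne : S ≠ Ω := by rw [hSdef]; exact hΩ.1 D hD
    obtain ⟨x, hxΩ, hxS⟩ := Set.exists_of_ssubset (hSΩ.ssubset_of_ne hne)
    exact ⟨x, hxΩ, hxS⟩
  obtain ⟨x0, hx0⟩ := hx0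
  have hΩSC : Ω \ S ⊆ C := Set.subset_union_left
  have hsub : ∀ D' : Set V, IsCompOf G Ω D' → ¬ nbhd G D' ⊆ S → D' ⊆ C :=
    fun D' h1 h2 z hz => Or.inr ⟨D', ⟨h1, h2⟩, hz⟩
  -- C is closed under adjacency avoiding S
  have hCclosed : ∀ v ∈ C, ∀ w : V, G.Adj v w → w ∉ S → w ∈ C := by
    rintro v (⟨hvΩ, hvS⟩ | ⟨D', ⟨hD', hD'S⟩, hvD'⟩) w hadj hwS
    · by_cases hwΩ : w ∈ Ω
      · exact Or.inl ⟨hwΩ, hwS⟩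
      · refine hsub _ (compOf_isCompOf hwΩ) ?_ (compOf_self hwΩ)
        intro hsubS
        apply hvS
        apply hsubS
        refine ⟨?_, w, compOf_self hwΩ, hadj⟩
        exact fun hv => Set.disjoint_left.mp (compOf_isCompOf hwΩ).2.1 hv hvΩ
    · by_cases hwΩ : w ∈ Ω
      · exact Or.inl ⟨hwΩ, hwS⟩
      · exact hsub _ hD' hD'S (hD'.2.2.2 v hvD' w hadj hwΩ)
  have hCS : Disjoint C S := by
    rw [Set.disjoint_left]
    rintro x (⟨_, hxS⟩ | ⟨D', ⟨hD', _⟩, hx⟩) hxS'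
    · exact hxS hxS'
    · exact Set.disjoint_left.mp hD'.2.1 hx (hSΩ hxS')
  -- every vertex of C reaches Ω \ S inside C
  have hreachB : ∀ x (hx : x ∈ C), ∃ u, ∃ hu : u ∈ Ω \ S,
      (G.induce C).Reachable ⟨x, hx⟩ ⟨u, hΩSC hu⟩ := by
    rintro x (hx | ⟨D', ⟨hD', hD'S⟩, hxD'⟩)
    · exact ⟨x, hx, Reachable.refl _⟩
    · obtain ⟨t, htN, htS⟩ := Set.not_subset.mp hD'S
      have htΩ : t ∈ Ω := nbhd_subset hD' htN
      obtain ⟨htD', b, hbD', hadj⟩ := htN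
      have hreach : (G.induce D').Reachable ⟨x, hxD'⟩ ⟨b, hbD'⟩ := hD'.2.2.1.preconnected _ _
      have h2 := reach_mono G (hsub _ hD' hD'S) hxD' hbD' hreach
      exact ⟨t, ⟨htΩ, htS⟩, h2.trans (Adj.reachable (by exact hadj.symm))⟩
  -- any two vertices of Ω \ S are connected inside C
  have hreachA : ∀ u v (hu : u ∈ Ω \ S) (hv : v ∈ Ω \ S),
      (G.induce C).Reachable ⟨u, hΩSC hu⟩ ⟨v, hΩSC hv⟩ := by
    intro u v hu hv
    by_cases he : u = v
    · subst he; exact Reachable.refl _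
    by_cases hadj : G.Adj u v
    · exact Adj.reachable (by exact hadj)
    · obtain ⟨D'', hD'', hu', hv'⟩ := hΩ.2 u hu.1 v hv.1 he hadj
      have hns : ¬ nbhd G D'' ⊆ S := fun h => hu.2 (h hu')
      obtain ⟨_, a, haD, hadja⟩ := hu'
      obtain ⟨_, b, hbD, hadjb⟩ := hv'
      have hr := reach_mono G (hsub _ hD'' hns) haD hbD (hD''.2.2.1.preconnected ⟨a, haD⟩ ⟨b, hbD⟩)
      exact ((Adj.reachable (by exact hadja)).trans hr).trans (Adj.reachable (by exact hadjb.symm))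
  have hCconn : (G.induce C).Connected := by
    have : Nonempty ↥C := ⟨⟨x0, hΩSC hx0⟩⟩
    refine ⟨fun a b => ?_⟩
    obtain ⟨u, hu, hru⟩ := hreachB a.1 a.2
    obtain ⟨v, hv, hrv⟩ := hreachB b.1 b.2
    exact (hru.trans (hreachA u v hu hv)).trans hrv.symm
  have hCcomp : IsCompOf G S C := ⟨⟨x0, hΩSC hx0⟩, hCS, hCconn, hCclosed⟩
  have hDcomp : IsCompOf G S D := by
    refine ⟨hD.1, ?_, hD.2.2.1, ?_⟩
    · exact Set.disjoint_left.mpr fun d hd hdS => hdS.1 hd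
    · intro v hv w hadj hwS
      by_cases hwΩ : w ∈ Ω
      · exact absurd ⟨fun hwD => Set.disjoint_left.mp hD.2.1 hwD hwΩ, v, hv, hadj.symm⟩ hwS
      · exact hD.2.2.2 v hv w hadj hwΩ
  have hfullD : FullTo G S D := by
    rintro s ⟨_, d, hd, hadj⟩
    exact ⟨d, hd, hadj⟩
  have hfullC : FullTo G S C := by
    intro s hs
    have hsΩ : s ∈ Ω := hSΩ hs
    by_cases hadj : G.Adj s x0
    · exact ⟨x0, hΩSC hx0, hadj⟩
    · have hne : s ≠ x0 := fun h => hx0.2 (h ▸ hs)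
      obtain ⟨D'', hD'', hs', hx'⟩ := hΩ.2 s hsΩ x0 hx0.1 hne hadj
      have hns : ¬ nbhd G D'' ⊆ S := fun h => hx0.2 (h hx')
      obtain ⟨_, a, haD, hadja⟩ := hs'
      exact ⟨a, hsub _ hD'' hns haD, hadja⟩
  have hCneD : C ≠ D := by
    intro h
    have : x0 ∈ D := h ▸ hΩSC hx0
    exact Set.disjoint_left.mp hD.2.1 this hx0.1
  exact ⟨⟨C, D, hCcomp, hDcomp, hCneD, hfullC, hfullD⟩, hCcomp, hDcomp, hfullC, hfullD, hCneD⟩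
end

section
/- Let G be a P₆-free graph and Ω a potential maximal clique in G. Suppose v₁, v₂ ∈ Ω are nonadjacent and there is exactly one component D₀ of G − Ω with {v₁, v₂} ⊆ N(D₀). Then for any components D₁, D₂ of G − Ω different from D₀ with v₁ ∈ N(D₁) and v₂ ∈ N(D₂), we have Ω = N(D₀) ∪ N(D₁) ∪ N(D₂) ∪ ((N(v₁) ∩ N(v₂)) \ D₀). -/
/-!
Let `x ∈ Ω` lie in none of `N(D₀)`, `N(D₁)`, `N(D₂)`, and suppose `x` is not adjacent to `v₁`.
As `Ω` is a potential maximal clique, some component `D` has `x, v₁ ∈ N(D)`; it differs from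
`D₀, D₁, D₂`, and `v₂ ∉ N(D)` by the uniqueness of `D₀`. Take an induced `x`–`v₁` path `P`
through `D` (a shortest path in `G[D ∪ {x, v₁}]`) and neighbours `c₁ ∈ D₁` of `v₁`,
`c₂ ∈ D₂` of `v₂`. If `x ≁ v₂`, then `P`, an induced `v₁`–`v₂` path through `D₀`, and `c₂`
form an induced path on at least six vertices; if `x ∼ v₂`, so does `c₂ v₂ P c₁`. Hence `x` is
adjacent to `v₁`, and symmetrically to `v₂`. Conversely, a common neighbour of `v₁` and `v₂`
outside `Ω` lies in a component whose neighbourhood contains both, which must be `D₀`.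
-/

open SimpleGraph

variable {V : Type*}

/-- A graph is `P₆`-free if it contains no induced path on 6 vertices. -/
def P6Free (G : SimpleGraph V) : Prop :=
  IsEmpty (pathGraph 6 ↪g G)

namespace SimpleGraph

variable {W : Type*} {G : SimpleGraph V} {G' : SimpleGraph W}

/-- The vertices of an induced path are distinct, and two of them are adjacent exactly when they
are consecutive (`IsInducedPath.adj_getElem_iff`). -/
def IsInducedPath (G : SimpleGraph V) : List V → Prop
  | [] => True
  | a :: l => a ∉ l ∧ (∀ c ∈ l, G.Adj a c ↔ l.head? = some c) ∧ G.IsInducedPath l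

namespace IsInducedPath

theorem nodup : ∀ {l : List V}, G.IsInducedPath l → l.Nodup
  | [], _ => List.nodup_nil
  | _ :: _, ⟨ha, _, hl⟩ => List.nodup_cons.2 ⟨ha, hl.nodup⟩

theorem adj_getElem_iff : ∀ {l : List V}, G.IsInducedPath l → ∀ {i j : ℕ} (hi : i < l.length)
    (hj : j < l.length), G.Adj l[i] l[j] ↔ i + 1 = j ∨ j + 1 = i
  | [], _, _, _, hi, _ => absurd hi (Nat.not_lt_zero _)
  | a :: l, ⟨ha, hadj, hl⟩, i, j, hi, hj => by
    have head_eq {k : ℕ} (hk : k < l.length) : l.head? = some l[k] ↔ k = 0 := by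
      rw [List.head?_eq_getElem?, List.getElem?_eq_getElem (by omega), Option.some_inj,
        hl.nodup.getElem_inj_iff, eq_comm]
    match i, j with
    | 0, 0 => simp
    | 0, j + 1 =>
      have hj : j < l.length := by simpa using hj
      simpa [head_eq hj] using hadj l[j] (List.getElem_mem hj)
    | i + 1, 0 =>
      have hi : i < l.length := by simpa using hi
      simpa [head_eq hi, G.adj_comm] using hadj l[i] (List.getElem_mem hi)
    | i + 1, j + 1 =>
      simpa using hl.adj_getElem_iff (Nat.lt_of_succ_lt_succ hi) (Nat.lt_of_succ_lt_succ hj)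

theorem map (φ : G ↪g G') : ∀ {l : List V}, G.IsInducedPath l → G'.IsInducedPath (l.map φ)
  | [], _ => trivial
  | a :: l, ⟨ha, hadj, hl⟩ => by
    refine ⟨by simpa using ha, ?_, hl.map φ⟩
    simp only [List.mem_map, forall_exists_index, and_imp, forall_apply_eq_imp_iff₂, φ.map_adj_iff]
    intro c hc
    rw [hadj c hc, List.head?_map]
    cases l.head? <;> simp

theorem append {p : List V} {a : V} {q : List V} (hp : G.IsInducedPath (p ++ [a]))
    (hq : G.IsInducedPath (a :: q)) (hpq : ∀ u ∈ p, ∀ w ∈ q, u ≠ w ∧ ¬ G.Adj u w) :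
    G.IsInducedPath (p ++ a :: q) := by
  induction p with
  | nil => exact hq
  | cons b p ih =>
    simp only [List.cons_append, IsInducedPath] at hp ⊢
    obtain ⟨hb, hbadj, hp⟩ := hp
    have head_eq : (p ++ a :: q).head? = (p ++ [a]).head? := by cases p <;> rfl
    refine ⟨?_, ?_, ih hp fun u hu => hpq u (.tail _ hu)⟩
    · rw [List.mem_append, List.mem_cons]
      rintro (hbp | rfl | hbq)
      · exact hb (List.mem_append_left _ hbp)
      · exact hb (List.mem_append_right _ (.head _))
      · exact (hpq b (.head _) b hbq).1 rfl
    · intro c hc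
      rw [head_eq]
      rcases List.mem_append.1 hc with hcp | hcq
      · exact hbadj c (List.mem_append_left _ hcp)
      rcases List.mem_cons.1 hcq with rfl | hcq
      · exact hbadj c (List.mem_append_right _ (.head _))
      · refine iff_of_false (hpq b (.head _) c hcq).2 ?_
        cases p with
        | nil => exact fun h => hq.1 (Option.some_inj.1 h ▸ hcq)
        | cons d p => exact fun h => (hpq d (.tail _ (.head _)) c hcq).1 (Option.some_inj.1 h)

theorem length_lt_six {l : List V} (h : G.IsInducedPath l) (hG : P6Free G) :
    l.length < 6 := by
  by_contra! hl
  exact hG.false ⟨⟨fun i => l[i.val], fun i j hij => Fin.ext ((h.nodup.getElem_inj_iff).1 hij)⟩,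
    fun {i j} => (h.adj_getElem_iff (by omega) (by omega)).trans pathGraph_adj.symm⟩

end IsInducedPath

theorem Adj.isInducedPath_pair {a b : V} (h : G.Adj a b) : G.IsInducedPath [a, b] :=
  ⟨by simpa using h.ne, by simpa using h, by simp [IsInducedPath]⟩

theorem ne_and_not_adj_comm {a b : V} : a ≠ b ∧ ¬ G.Adj a b ↔ b ≠ a ∧ ¬ G.Adj b a := by
  rw [ne_comm, G.adj_comm]

theorem Walk.isInducedPath_support {u v : V} (p : G.Walk u v) (hp : p.length = G.dist u v) :
    G.IsInducedPath p.support := by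
  classical
  induction p with
  | nil => exact ⟨List.not_mem_nil, by simp, trivial⟩
  | @cons u w v h q ih =>
    rw [Walk.length_cons] at hp
    have hq : q.length = G.dist w v := by
      have := h.reachable.dist_triangle_left v
      rw [dist_eq_one_iff_adj.2 h] at this
      have := G.dist_le q
      omega
    have hu : u ∉ q.support := fun hu => by
      have := G.dist_le (q.dropUntil u hu)
      have := q.length_dropUntil_le_length hu
      omega
    refine ⟨hu, fun c hc => ⟨fun hadj => ?_, fun hwc => ?_⟩, ih hq⟩
    · have hshort := G.dist_le (.cons hadj (q.dropUntil c hc))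
      have hsplit := congrArg Walk.length (q.take_spec hc)
      rw [Walk.length_cons] at hshort
      rw [Walk.length_append] at hsplit
      rw [← q.cons_tail_support, List.head?_cons,
        Walk.eq_of_length_eq_zero (by omega : (q.takeUntil c hc).length = 0)]
    · rw [← q.cons_tail_support, List.head?_cons, Option.some_inj] at hwc
      exact hwc ▸ h

end SimpleGraph

variable {G : SimpleGraph V} {Ω D D' : Set V} {u v w : V}

namespace IsCompOf

theorem notMem (hD : IsCompOf G Ω D) (hu : u ∈ Ω) : u ∉ D :=
  Set.disjoint_right.1 hD.2.1 hu

theorem mem_of_adj (hD : IsCompOf G Ω D) (hu : u ∈ D) (huw : G.Adj u w) (hw : w ∉ Ω) : w ∈ D :=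
  hD.2.2.2 u hu w huw hw

theorem nbhd_subset (hD : IsCompOf G Ω D) : nbhd G D ⊆ Ω :=
  fun _ ⟨huD, _, hd, hadj⟩ => by_contra fun hu => huD (hD.mem_of_adj hd hadj.symm hu)

theorem subset_of_mem (hD : IsCompOf G Ω D) (hD' : IsCompOf G Ω D') (hw : w ∈ D)
    (hw' : w ∈ D') : D ⊆ D' := by
  have walk_mem : ∀ {a b : D}, (G.induce D).Walk a b → a.val ∈ D' → b.val ∈ D' := by
    intro a b p
    induction p with
    | nil => exact id
    | cons h _ ih => exact fun ha => ih (hD'.mem_of_adj ha h fun hΩ => hD.notMem hΩ (by simp))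
  intro d hd
  exact walk_mem (hD.2.2.1.preconnected ⟨w, hw⟩ ⟨d, hd⟩).some hw'

theorem eq_of_mem (hD : IsCompOf G Ω D) (hD' : IsCompOf G Ω D') (hw : w ∈ D) (hw' : w ∈ D') :
    D = D' :=
  (hD.subset_of_mem hD' hw hw').antisymm (hD'.subset_of_mem hD hw' hw)

theorem ne_and_not_adj_of_ne (hD : IsCompOf G Ω D) (hD' : IsCompOf G Ω D') (hne : D ≠ D')
    (hu : u ∈ D) (hw : w ∈ D') : u ≠ w ∧ ¬ G.Adj u w :=
  ⟨fun h => hne (hD.eq_of_mem hD' hu (h ▸ hw)),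
    fun h => hne (hD.eq_of_mem hD' hu (hD'.mem_of_adj hw h.symm fun hΩ => hD.notMem hΩ hu))⟩

theorem ne_and_not_adj_of_notMem_nbhd (hD : IsCompOf G Ω D) (hu : u ∈ Ω) (huD : u ∉ nbhd G D)
    (hw : w ∈ D) : u ≠ w ∧ ¬ G.Adj u w :=
  ⟨fun h => hD.notMem hu (h ▸ hw), fun h => huD ⟨hD.notMem hu, w, hw, h⟩⟩

theorem exists_isInducedPath (hD : IsCompOf G Ω D) (hu : u ∈ nbhd G D) (hv : v ∈ nbhd G D)
    (hne : u ≠ v) (hna : ¬ G.Adj u v) :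
    ∃ m, m ≠ [] ∧ (∀ w ∈ m, w ∈ D) ∧ G.IsInducedPath (u :: m ++ [v]) := by
  obtain ⟨-, d, hd, hud⟩ := hu
  obtain ⟨-, d', hd', hvd'⟩ := hv
  set S : Set V := insert u (insert v D)
  have hDS : D ⊆ S := fun x hx => .inr (.inr hx)
  have hreach : (G.induce S).Reachable ⟨u, .inl rfl⟩ ⟨v, .inr (.inl rfl)⟩ := by
    have hdd' := (hD.2.2.1.preconnected ⟨d, hd⟩ ⟨d', hd'⟩).map (induceHomOfLE G hDS).toHom
    exact (show (G.induce S).Adj ⟨u, _⟩ ⟨d, hDS hd⟩ from hud).reachable.trans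
      (hdd'.trans (show (G.induce S).Adj ⟨d', hDS hd'⟩ ⟨v, _⟩ from hvd'.symm).reachable)
  obtain ⟨p, hp⟩ := hreach.exists_walk_length_eq_dist
  have hpath := (p.isInducedPath_support hp).map (Embedding.induce S)
  have hsupp : p.support.map (Embedding.induce (G := G) S) =
      u :: (p.tail.support.dropLast.map Subtype.val) ++ [v] := by
    have hnil : ¬ p.Nil := Walk.not_nil_of_ne fun h => hne (congrArg Subtype.val h)
    rw [← Walk.cons_support_tail hnil]
    nth_rw 1 [← p.tail.dropLast_support_concat]
    simp only [List.map_cons, List.map_append, List.map_nil, List.cons_append]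
    rfl
  rw [hsupp] at hpath
  refine ⟨p.tail.support.dropLast.map Subtype.val, ?_, ?_, hpath⟩
  · intro hm
    rw [hm] at hpath
    exact hna ((hpath.2.1 v (.head _)).2 rfl)
  · intro w hw
    have hwu : w ≠ u := fun h => hpath.1 (List.mem_append_left _ (h ▸ hw))
    have hwv : w ≠ v := (List.nodup_append.1 hpath.2.2.nodup).2.2 _ hw _ (.head _)
    obtain ⟨x, -, rfl⟩ := List.mem_map.1 hw
    rcases x.2 with h | h | h
    exacts [absurd h hwu, absurd h hwv, h]

end IsCompOf

theorem exists_isCompOf_mem (G : SimpleGraph V) (hw : w ∉ Ω) : ∃ D, IsCompOf G Ω D ∧ w ∈ D := by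
  classical
  let D : Set V := {v | ∃ p : G.Walk w v, ∀ x ∈ p.support, x ∉ Ω}
  have hwD : w ∈ D := ⟨.nil, by simpa using hw⟩
  have hDΩ : ∀ v ∈ D, v ∉ Ω := fun v ⟨p, hp⟩ => hp v p.end_mem_support
  refine ⟨D, ⟨⟨w, hwD⟩, Set.disjoint_left.2 hDΩ, ?_, ?_⟩, hwD⟩
  · refine G.induce_connected_of_patches w hwD fun {v} ⟨p, hp⟩ => ⟨{x | x ∈ p.support}, ?_,
      p.start_mem_support, p.end_mem_support, p.connected_induce_support.preconnected _ _⟩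
    exact fun x hx =>
      ⟨p.takeUntil x hx, fun y hy => hp y (p.support_takeUntil_subset_support hx hy)⟩
  · rintro v ⟨p, hp⟩ z hvz hz
    refine ⟨p.concat hvz, fun x hx => ?_⟩
    rw [Walk.support_concat, List.mem_append, List.mem_singleton] at hx
    exact hx.elim (hp x) (· ▸ hz)

theorem isInducedPath_of_not_adj {D₀ D₂ : Set V} {x v₁ v₂ c₂ : V} {m m' : List V}
    (hD : IsCompOf G Ω D) (hD₀ : IsCompOf G Ω D₀) (hD₂ : IsCompOf G Ω D₂)
    (hDD₀ : D ≠ D₀) (hDD₂ : D ≠ D₂) (hD₀D₂ : D₀ ≠ D₂) (hx : x ∈ Ω) (hv₁ : v₁ ∈ Ω) (hv₂ : v₂ ∈ Ω)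
    (hx₀ : x ∉ nbhd G D₀) (hx₂ : x ∉ nbhd G D₂) (hxv₂ : ¬ G.Adj x v₂)
    (hv₂D : v₂ ∉ nbhd G D) (hv₁D₂ : v₁ ∉ nbhd G D₂) (hc₂ : c₂ ∈ D₂) (hv₂c₂ : G.Adj v₂ c₂)
    (hmD : ∀ w ∈ m, w ∈ D) (hm'D₀ : ∀ w ∈ m', w ∈ D₀)
    (hP : G.IsInducedPath (x :: m ++ [v₁])) (hQ : G.IsInducedPath (v₁ :: m' ++ [v₂])) :
    G.IsInducedPath (x :: m ++ v₁ :: m' ++ [v₂, c₂]) := by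
  have hxv₂' : x ≠ v₂ := by rintro rfl; exact hx₂ ⟨hD₂.notMem hx, c₂, hc₂, hv₂c₂⟩
  rw [List.append_assoc]
  refine hP.append (hQ.append hv₂c₂.isInducedPath_pair ?_) ?_
  · simp only [List.mem_cons, List.not_mem_nil, or_false]
    rintro u (rfl | hu) w rfl
    · exact hD₂.ne_and_not_adj_of_notMem_nbhd hv₁ hv₁D₂ hc₂
    · exact hD₀.ne_and_not_adj_of_ne hD₂ hD₀D₂ (hm'D₀ u hu) hc₂
  · simp only [List.append_eq, List.mem_cons, List.mem_append, List.not_mem_nil, or_false]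
    rintro u (rfl | hu) w (hw | rfl | rfl)
    · exact hD₀.ne_and_not_adj_of_notMem_nbhd hx hx₀ (hm'D₀ w hw)
    · exact ⟨hxv₂', hxv₂⟩
    · exact hD₂.ne_and_not_adj_of_notMem_nbhd hx hx₂ hc₂
    · exact hD.ne_and_not_adj_of_ne hD₀ hDD₀ (hmD u hu) (hm'D₀ w hw)
    · exact ne_and_not_adj_comm.1 (hD.ne_and_not_adj_of_notMem_nbhd hv₂ hv₂D (hmD u hu))
    · exact hD.ne_and_not_adj_of_ne hD₂ hDD₂ (hmD u hu) hc₂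

theorem isInducedPath_of_adj {D₁ D₂ : Set V} {x v₁ v₂ c₁ c₂ : V} {m : List V}
    (hD : IsCompOf G Ω D) (hD₁ : IsCompOf G Ω D₁) (hD₂ : IsCompOf G Ω D₂)
    (hDD₁ : D ≠ D₁) (hDD₂ : D ≠ D₂) (hD₁D₂ : D₁ ≠ D₂) (hx : x ∈ Ω) (hv₁ : v₁ ∈ Ω) (hv₂ : v₂ ∈ Ω)
    (hne : v₁ ≠ v₂) (hna : ¬ G.Adj v₁ v₂) (hx₁ : x ∉ nbhd G D₁) (hx₂ : x ∉ nbhd G D₂)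
    (hxv₂ : G.Adj x v₂) (hv₂D : v₂ ∉ nbhd G D) (hv₁D₂ : v₁ ∉ nbhd G D₂) (hv₂D₁ : v₂ ∉ nbhd G D₁)
    (hc₁ : c₁ ∈ D₁) (hv₁c₁ : G.Adj v₁ c₁) (hc₂ : c₂ ∈ D₂) (hv₂c₂ : G.Adj v₂ c₂)
    (hmD : ∀ w ∈ m, w ∈ D) (hP : G.IsInducedPath (x :: m ++ [v₁])) :
    G.IsInducedPath (c₂ :: v₂ :: x :: m ++ [v₁, c₁]) := by
  have hPc : G.IsInducedPath (x :: m ++ [v₁, c₁]) := by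
    refine hP.append hv₁c₁.isInducedPath_pair ?_
    simp only [List.mem_cons, List.not_mem_nil, or_false]
    rintro u (rfl | hu) w rfl
    · exact hD₁.ne_and_not_adj_of_notMem_nbhd hx hx₁ hc₁
    · exact hD.ne_and_not_adj_of_ne hD₁ hDD₁ (hmD u hu) hc₁
  have hvPc : G.IsInducedPath (v₂ :: x :: m ++ [v₁, c₁]) := by
    refine IsInducedPath.append (p := [v₂]) hxv₂.symm.isInducedPath_pair hPc ?_
    simp only [List.append_eq, List.mem_cons, List.mem_append, List.not_mem_nil, or_false]
    rintro u rfl w (hw | rfl | rfl)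
    · exact hD.ne_and_not_adj_of_notMem_nbhd hv₂ hv₂D (hmD w hw)
    · exact ⟨hne.symm, fun h => hna h.symm⟩
    · exact hD₁.ne_and_not_adj_of_notMem_nbhd hv₂ hv₂D₁ hc₁
  refine IsInducedPath.append (p := [c₂]) hv₂c₂.symm.isInducedPath_pair hvPc ?_
  simp only [List.append_eq, List.mem_cons, List.mem_append, List.not_mem_nil, or_false]
  rintro u rfl w ((rfl | hw) | rfl | rfl)
  · exact ne_and_not_adj_comm.1 (hD₂.ne_and_not_adj_of_notMem_nbhd hx hx₂ hc₂)
  · exact hD₂.ne_and_not_adj_of_ne hD hDD₂.symm hc₂ (hmD w hw)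
  · exact ne_and_not_adj_comm.1 (hD₂.ne_and_not_adj_of_notMem_nbhd hv₁ hv₁D₂ hc₂)
  · exact hD₂.ne_and_not_adj_of_ne hD₁ hD₁D₂.symm hc₂ hc₁

theorem adj_of_notMem_nbhds {D₀ D₁ D₂ : Set V} {x v₁ v₂ : V} (hP6 : P6Free G) (hΩ : IsPMC G Ω)
    (hv₁ : v₁ ∈ Ω) (hv₂ : v₂ ∈ Ω) (hne : v₁ ≠ v₂) (hna : ¬ G.Adj v₁ v₂)
    (hD₀ : IsCompOf G Ω D₀) (hc₁ : v₁ ∈ nbhd G D₀) (hc₂ : v₂ ∈ nbhd G D₀)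
    (huniq : ∀ D : Set V, IsCompOf G Ω D → v₁ ∈ nbhd G D → v₂ ∈ nbhd G D → D = D₀)
    (hD₁ : IsCompOf G Ω D₁) (hD₂ : IsCompOf G Ω D₂) (hne₁ : D₁ ≠ D₀) (hne₂ : D₂ ≠ D₀)
    (hn₁ : v₁ ∈ nbhd G D₁) (hn₂ : v₂ ∈ nbhd G D₂) (hx : x ∈ Ω)
    (hx₀ : x ∉ nbhd G D₀) (hx₁ : x ∉ nbhd G D₁) (hx₂ : x ∉ nbhd G D₂) : G.Adj x v₁ := by
  by_contra hxv₁
  have hxv₁' : x ≠ v₁ := fun h => hx₀ (h ▸ hc₁)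
  obtain ⟨D, hD, hxD, hv₁D⟩ := hΩ.2 x hx v₁ hv₁ hxv₁' hxv₁
  have hDD₀ : D ≠ D₀ := fun h => hx₀ (h ▸ hxD)
  have hDD₁ : D ≠ D₁ := fun h => hx₁ (h ▸ hxD)
  have hDD₂ : D ≠ D₂ := fun h => hx₂ (h ▸ hxD)
  have hD₁D₂ : D₁ ≠ D₂ := fun h => hne₁ (huniq D₁ hD₁ hn₁ (h ▸ hn₂))
  have hv₂D : v₂ ∉ nbhd G D := fun h => hDD₀ (huniq D hD hv₁D h)
  have hv₂D₁ : v₂ ∉ nbhd G D₁ := fun h => hne₁ (huniq D₁ hD₁ hn₁ h)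
  have hv₁D₂ : v₁ ∉ nbhd G D₂ := fun h => hne₂ (huniq D₂ hD₂ h hn₂)
  obtain ⟨m, hm, hmD, hP⟩ := hD.exists_isInducedPath hxD hv₁D hxv₁' hxv₁
  obtain ⟨c₁, hc₁D₁, hv₁c₁⟩ := hn₁.2
  obtain ⟨c₂, hc₂D₂, hv₂c₂⟩ := hn₂.2
  have hm_len := List.length_pos_of_ne_nil hm
  by_cases hxv₂ : G.Adj x v₂
  · have := (isInducedPath_of_adj hD hD₁ hD₂ hDD₁ hDD₂ hD₁D₂ hx hv₁ hv₂ hne hna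
      hx₁ hx₂ hxv₂ hv₂D hv₁D₂ hv₂D₁ hc₁D₁ hv₁c₁ hc₂D₂ hv₂c₂ hmD hP).length_lt_six hP6
    simp only [List.length_cons, List.length_append, List.length_nil] at this
    omega
  · obtain ⟨m', hm', hm'D₀, hQ⟩ := hD₀.exists_isInducedPath hc₁ hc₂ hne hna
    have := (isInducedPath_of_not_adj hD hD₀ hD₂ hDD₀ hDD₂ hne₂.symm hx hv₁
      hv₂ hx₀ hx₂ hxv₂ hv₂D hv₁D₂ hc₂D₂ hv₂c₂ hmD hm'D₀ hP hQ).length_lt_six hP6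
    simp only [List.length_cons, List.length_append, List.length_nil] at this
    have := List.length_pos_of_ne_nil hm'
    omega

theorem statement_11_general (G : SimpleGraph V) (hP6 : P6Free G)
    (Ω : Set V) (hΩ : IsPMC G Ω) (v₁ v₂ : V) (hv₁ : v₁ ∈ Ω) (hv₂ : v₂ ∈ Ω)
    (hne : v₁ ≠ v₂) (hna : ¬ G.Adj v₁ v₂)
    (D₀ : Set V) (hD₀ : IsCompOf G Ω D₀)
    (hc₁ : v₁ ∈ nbhd G D₀) (hc₂ : v₂ ∈ nbhd G D₀)
    (huniq : ∀ D : Set V, IsCompOf G Ω D → v₁ ∈ nbhd G D → v₂ ∈ nbhd G D → D = D₀)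
    (D₁ D₂ : Set V) (hD₁ : IsCompOf G Ω D₁) (hD₂ : IsCompOf G Ω D₂)
    (hne₁ : D₁ ≠ D₀) (hne₂ : D₂ ≠ D₀)
    (hn₁ : v₁ ∈ nbhd G D₁) (hn₂ : v₂ ∈ nbhd G D₂) :
    Ω = nbhd G D₀ ∪ nbhd G D₁ ∪ nbhd G D₂ ∪
      ((G.neighborSet v₁ ∩ G.neighborSet v₂) \ D₀) := by
  refine subset_antisymm (fun x hx => ?_) ?_
  · by_cases hx₀ : x ∈ nbhd G D₀
    · exact .inl (.inl (.inl hx₀))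
    by_cases hx₁ : x ∈ nbhd G D₁
    · exact .inl (.inl (.inr hx₁))
    by_cases hx₂ : x ∈ nbhd G D₂
    · exact .inl (.inr hx₂)
    have hxv₁ := adj_of_notMem_nbhds hP6 hΩ hv₁ hv₂ hne hna hD₀ hc₁ hc₂ huniq hD₁ hD₂ hne₁ hne₂
      hn₁ hn₂ hx hx₀ hx₁ hx₂
    have hxv₂ := adj_of_notMem_nbhds hP6 hΩ hv₂ hv₁ hne.symm (fun h => hna h.symm) hD₀ hc₂ hc₁
      (fun D hD h₂ h₁ => huniq D hD h₁ h₂) hD₂ hD₁ hne₂ hne₁ hn₂ hn₁ hx hx₀ hx₂ hx₁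
    exact .inr ⟨⟨hxv₁.symm, hxv₂.symm⟩, hD₀.notMem hx⟩
  · refine Set.union_subset (Set.union_subset (Set.union_subset hD₀.nbhd_subset hD₁.nbhd_subset)
      hD₂.nbhd_subset) ?_
    rintro y ⟨⟨hyv₁, hyv₂⟩, hyD₀⟩
    by_contra hy
    obtain ⟨D, hD, hyD⟩ := exists_isCompOf_mem G hy
    exact hyD₀ (huniq D hD ⟨hD.notMem hv₁, y, hyD, hyv₁⟩
      ⟨hD.notMem hv₂, y, hyD, hyv₂⟩ ▸ hyD)

/-- Deducing a PMC when the nonedge `v₁v₂` is covered by a unique component `D₀`. -/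
theorem statement_11 [Fintype V] (G : SimpleGraph V) (hP6 : P6Free G)
    (Ω : Set V) (hΩ : IsPMC G Ω) (v₁ v₂ : V) (hv₁ : v₁ ∈ Ω) (hv₂ : v₂ ∈ Ω)
    (hne : v₁ ≠ v₂) (hna : ¬ G.Adj v₁ v₂)
    (D₀ : Set V) (hD₀ : IsCompOf G Ω D₀)
    (hc₁ : v₁ ∈ nbhd G D₀) (hc₂ : v₂ ∈ nbhd G D₀)
    (huniq : ∀ D : Set V, IsCompOf G Ω D → v₁ ∈ nbhd G D → v₂ ∈ nbhd G D → D = D₀)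
    (D₁ D₂ : Set V) (hD₁ : IsCompOf G Ω D₁) (hD₂ : IsCompOf G Ω D₂)
    (hne₁ : D₁ ≠ D₀) (hne₂ : D₂ ≠ D₀)
    (hn₁ : v₁ ∈ nbhd G D₁) (hn₂ : v₂ ∈ nbhd G D₂) :
    Ω = nbhd G D₀ ∪ nbhd G D₁ ∪ nbhd G D₂ ∪
      ((G.neighborSet v₁ ∩ G.neighborSet v₂) \ D₀) :=
  statement_11_general G hP6 Ω hΩ v₁ v₂ hv₁ hv₂ hne hna D₀ hD₀ hc₁ hc₂ huniq D₁ D₂ hD₁ hD₂ hne₁ hne₂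
    hn₁ hn₂
end
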